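/- arXiv:math/0205226 — 3 statements merged into one kernel-verified Lean document; each statement's English description precedes it below -/
import Mathlib

section
/- For a walk w of length 2n+k with n up steps +1 and n+k down steps -1 ending with a down step, there are exactly k low records, i.e. k steps p_1 < ... < p_k that are left-to-right strict minima with values w(p_i) = k - i + min_p w(p). -/
/-- Partial sum of the first `p` increments of a walk `w`. -/
def psum {m : ℕ} (w : Fin m → ℤ) (p : ℕ) : ℤ :=
  ∑ i ∈ Finset.univ.filter (fun i : Fin m => i.val < p), w i

/-- `w` belongs to `B_{n,k}`. -/
def IsBWalk (n k : ℕ) (w : Fin (2 * n + k) → ℤ) : Prop :=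
  (∀ i, w i = 1 ∨ w i = -1) ∧
  (Finset.univ.filter (fun i => w i = 1)).card = n ∧
  ∀ i : Fin (2 * n + k), i.val = 2 * n + k - 1 → w i = -1

/-- Minimum value of the walk `w` over all steps `0 ≤ p ≤ 2n+k`. -/
def minVal (n k : ℕ) (w : Fin (2 * n + k) → ℤ) : ℤ :=
  (Finset.range (2 * n + k + 1)).inf' (by simp) (psum w)

/-- The set of low records of `w`: steps `1 ≤ p ≤ 2n+k` that are strict
left-to-right minima whose value is among the `k` lowest values. -/
def lowRecords (n k : ℕ) (w : Fin (2 * n + k) → ℤ) : Finset ℕ :=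
  (Finset.Icc 1 (2 * n + k)).filter
    (fun p => (∀ q < p, psum w q > psum w p) ∧ psum w p < minVal n k w + k)

lemma psum_zero' {m : ℕ} (w : Fin m → ℤ) : psum w 0 = 0 := by simp [psum]

lemma psum_succ' {m : ℕ} (w : Fin m → ℤ) {p : ℕ} (hp : p < m) :
    psum w (p + 1) = psum w p + w ⟨p, hp⟩ := by
  unfold psum
  have h : Finset.univ.filter (fun i : Fin m => i.val < p + 1)
      = insert ⟨p, hp⟩ (Finset.univ.filter (fun i : Fin m => i.val < p)) := by
    ext i
    simp [Fin.ext_iff]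
    omega
  rw [h, Finset.sum_insert (by simp)]
  ring

lemma psum_total' (n k : ℕ) (w : Fin (2 * n + k) → ℤ) (hw : IsBWalk n k w) :
    psum w (2 * n + k) = -(k : ℤ) := by
  obtain ⟨h1, h2, -⟩ := hw
  have h : Finset.univ.filter (fun i : Fin (2 * n + k) => i.val < 2 * n + k)
      = Finset.univ := by
    ext i; simp [i.isLt]
  unfold psum
  rw [h, ← Finset.sum_filter_add_sum_filter_not Finset.univ (fun i => w i = 1)]
  have hc : (Finset.univ.filter (fun i : Fin (2 * n + k) => ¬ w i = 1)).card = n + k := by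
    have := Finset.card_filter_add_card_filter_not
      (s := (Finset.univ : Finset (Fin (2 * n + k)))) (p := fun i => w i = 1)
    simp only [Finset.card_univ, Fintype.card_fin, h2] at this
    omega
  have e1 : ∑ i ∈ Finset.univ.filter (fun i => w i = 1), w i = (n : ℤ) := by
    rw [Finset.sum_congr rfl (fun i hi => (Finset.mem_filter.mp hi).2),
      Finset.sum_const, h2]
    simp
  have e2 : ∑ i ∈ Finset.univ.filter (fun i => ¬ w i = 1), w i = -((n : ℤ) + k) := by
    have : ∀ i ∈ Finset.univ.filter (fun i : Fin (2*n+k) => ¬ w i = 1), w i = -1 := by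
      intro i hi
      rcases h1 i with h | h
      · exact absurd h (Finset.mem_filter.mp hi).2
      · exact h
    rw [Finset.sum_congr rfl this, Finset.sum_const, hc]
    push_cast; ring
  rw [e1, e2]; ring

/-- Discrete intermediate value theorem, decreasing direction. -/
lemma walk_ivt {m : ℕ} (w : Fin m → ℤ) (hstep : ∀ i, w i = 1 ∨ w i = -1) (v : ℤ) :
    ∀ b a : ℕ, a ≤ b → b ≤ m → v ≤ psum w a → psum w b ≤ v →
    ∃ r, a ≤ r ∧ r ≤ b ∧ psum w r = v := by
  intro b
  induction b with
  | zero =>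
    intro a ha _ h1 h2
    have := Nat.le_zero.mp ha
    subst this
    exact ⟨0, le_refl 0, le_refl 0, le_antisymm h2 h1⟩
  | succ c ih =>
    intro a ha hb h1 h2
    rcases Nat.lt_or_ge a (c + 1) with hac | hac
    · have hc : c < m := by omega
      by_cases hfc : psum w c ≤ v
      · obtain ⟨r, hr1, hr2, hr3⟩ := ih a (by omega) (by omega) h1 hfc
        exact ⟨r, hr1, by omega, hr3⟩
      · have hs := psum_succ' w hc
        rcases hstep ⟨c, hc⟩ with h | h <;> rw [h] at hs
        · omega
        · exact ⟨c + 1, by omega, le_refl _, by omega⟩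
    · have he : a = c + 1 := by omega
      subst he
      exact ⟨c + 1, le_refl _, le_refl _, le_antisymm h2 h1⟩

/-- A walk of `B_{n,k}` has exactly `k` low records `p₁ < ⋯ < p_k`, with values
`psum w pᵢ = k - i + min` (here expressed via the rank of the record). -/
theorem low_records_card_and_values (n k : ℕ) (hk : 1 ≤ k)
    (w : Fin (2 * n + k) → ℤ) (hw : IsBWalk n k w) :
    (lowRecords n k w).card = k ∧
      ∀ p ∈ lowRecords n k w,
        psum w p =
          minVal n k w + (k : ℤ) - 1 -
            (((lowRecords n k w).filter (fun p' => p' < p)).card : ℤ) := by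
  classical
  have hMle : ∀ p ≤ 2 * n + k, minVal n k w ≤ psum w p := by
    intro p hp
    exact Finset.inf'_le _ (by simp [Nat.lt_succ_iff]; omega)
  have hMex : ∃ p0, p0 ≤ 2 * n + k ∧ psum w p0 = minVal n k w := by
    obtain ⟨p0, hp0, hee⟩ := Finset.exists_mem_eq_inf' (s := Finset.range (2 * n + k + 1))
      (by simp) (psum w)
    exact ⟨p0, by simpa [Nat.lt_succ_iff] using hp0, hee.symm⟩
  have hMk : minVal n k w + k ≤ 0 := by
    have h := hMle (2 * n + k) (le_refl _)
    rw [psum_total' n k w hw] at h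
    omega
  have hreach : ∀ v, minVal n k w ≤ v → v ≤ 0 → ∃ p ≤ 2 * n + k, psum w p = v := by
    intro v hv1 hv2
    obtain ⟨p0, hp0, he⟩ := hMex
    obtain ⟨r, -, hr2, hr3⟩ := walk_ivt w hw.1 v p0 0 (Nat.zero_le _) hp0
      (by rw [psum_zero']; exact hv2) (by omega)
    exact ⟨r, by omega, hr3⟩
  have hsurj : ∀ v, minVal n k w ≤ v → v < minVal n k w + k →
      ∃ p ∈ lowRecords n k w, psum w p = v := by
    intro v hv1 hv2
    obtain ⟨q, hq, he⟩ := hreach v hv1 (by omega)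
    have hex : ∃ p, psum w p = v := ⟨q, he⟩
    have hpv : psum w (Nat.find hex) = v := Nat.find_spec hex
    have hple : Nat.find hex ≤ q := Nat.find_min' hex he
    have hppos : 1 ≤ Nat.find hex := by
      rcases Nat.eq_zero_or_pos (Nat.find hex) with h | h
      · rw [h, psum_zero'] at hpv; omega
      · exact h
    have hrec : ∀ q' < Nat.find hex, psum w q' > psum w (Nat.find hex) := by
      intro q' hq'
      by_contra hcon
      push_neg at hcon
      obtain ⟨r, -, hr2, hr3⟩ := walk_ivt w hw.1 v q' 0 (Nat.zero_le _) (by omega)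
        (by rw [psum_zero']; omega) (by omega)
      exact absurd hr3 (Nat.find_min hex (by omega))
    refine ⟨Nat.find hex, ?_, hpv⟩
    rw [lowRecords, Finset.mem_filter, Finset.mem_Icc]
    exact ⟨⟨hppos, by omega⟩, hrec, by rw [hpv]; exact hv2⟩
  have hmem : ∀ p ∈ lowRecords n k w,
      (1 ≤ p ∧ p ≤ 2 * n + k) ∧ (∀ q < p, psum w q > psum w p) ∧
        minVal n k w ≤ psum w p ∧ psum w p < minVal n k w + k := by
    intro p hp
    rw [lowRecords, Finset.mem_filter, Finset.mem_Icc] at hp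
    exact ⟨hp.1, hp.2.1, hMle p hp.1.2, hp.2.2⟩
  have hanti : ∀ p ∈ lowRecords n k w, ∀ p' ∈ lowRecords n k w, p < p' →
      psum w p' < psum w p := by
    intro p hp p' hp' hlt
    exact (hmem p' hp').2.1 p hlt
  have hcard : (lowRecords n k w).card = k := by
    have hb := Finset.card_bij (s := lowRecords n k w)
      (t := Finset.Ico (minVal n k w) (minVal n k w + k))
      (fun p _ => psum w p)
      (fun p hp => by
        rw [Finset.mem_Ico]; exact ⟨(hmem p hp).2.2.1, (hmem p hp).2.2.2⟩)
      (fun p hp p' hp' he => by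
        have he' : psum w p = psum w p' := he
        rcases lt_trichotomy p p' with h | h | h
        · have := hanti p hp p' hp' h; omega
        · exact h
        · have := hanti p' hp' p hp h; omega)
      (fun v hv => by
        rw [Finset.mem_Ico] at hv
        obtain ⟨p, hp, he⟩ := hsurj v hv.1 hv.2
        exact ⟨p, hp, he⟩)
    rw [hb, Int.card_Ico]
    omega
  refine ⟨hcard, ?_⟩
  intro p hp
  have hpM := (hmem p hp).2.2
  have hfil : ((lowRecords n k w).filter (fun p' => p' < p)).card
      = (Finset.Ico (psum w p + 1) (minVal n k w + k)).card := by
    apply Finset.card_bij (fun p' _ => psum w p')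
    · intro p' hp'
      rw [Finset.mem_filter] at hp'
      rw [Finset.mem_Ico]
      have := hanti p' hp'.1 p hp hp'.2
      exact ⟨by omega, (hmem p' hp'.1).2.2.2⟩
    · intro a ha b hb he
      have he' : psum w a = psum w b := he
      rw [Finset.mem_filter] at ha hb
      rcases lt_trichotomy a b with h | h | h
      · have := hanti a ha.1 b hb.1 h; omega
      · exact h
      · have := hanti b hb.1 a ha.1 h; omega
    · intro v hv
      rw [Finset.mem_Ico] at hv
      obtain ⟨p', hp', he⟩ := hsurj v (by omega) hv.2
      refine ⟨p', Finset.mem_filter.mpr ⟨hp', ?_⟩, he⟩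
      rcases lt_trichotomy p' p with h | h | h
      · exact h
      · exfalso; subst h; omega
      · exfalso; have := hanti p hp p' hp' h; omega
  rw [hfil, Int.card_Ico]
  have h0 : (0:ℤ) ≤ minVal n k w + ↑k - (psum w p + 1) := by omega
  rw [Int.toNat_of_nonneg h0]
  ring
end

section
/- Cyclic shifts transport low records: if w = (w_1,...,w_{2n+k}) is a walk in B_{n,k} with low records {p_1,...,p_k}, and w' = (w_s, w_{s+1}, ..., w_{s+2n+k-1}) (indices modulo 2n+k) is a cyclic shift of w, then the low records of w' are {p_1+s, ..., p_k+s} taken modulo 2n+k. -/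
/-- Cyclic shift of a walk by `s` positions: the shifted walk reads the
increments `w_s, w_{s+1}, …` (indices modulo the length). -/
def cyclicShift {m : ℕ} (s : ℕ) (w : Fin m → ℤ) : Fin m → ℤ :=
  fun i => w ⟨(i.val + s) % m, Nat.mod_lt _ i.pos⟩

namespace LRAux

/-- Window minimum of `F` over `[a, a+m]`. -/
def Mwin (m : ℕ) (F : ℕ → ℤ) (a : ℕ) : ℤ :=
  (Finset.range (m + 1)).inf' ⟨0, by simp⟩ fun p => F (a + p)

variable {m : ℕ} {k : ℤ} {F : ℕ → ℤ}

lemma Mwin_le (a : ℕ) {p : ℕ} (hp : p ≤ m) : Mwin m F a ≤ F (a + p) :=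
  Finset.inf'_le _ (Finset.mem_range.mpr (by omega))

lemma Mwin_exists (a : ℕ) : ∃ p ≤ m, F (a + p) = Mwin m F a := by
  obtain ⟨p, hp, h⟩ := Finset.exists_mem_eq_inf' (s := Finset.range (m + 1))
    ⟨0, by simp⟩ (fun p => F (a + p))
  refine ⟨p, ?_, h.symm⟩
  have := Finset.mem_range.mp hp
  omega

lemma le_of_lt_start (hm : 0 < m) (hk : 1 ≤ k) (hF : ∀ t, F (t + m) = F t - k) :
    ∀ d u a, a ≤ u + d → u < a → Mwin m F a + k ≤ F u := by
  intro d
  induction d with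
  | zero => intro u a h1 h2; omega
  | succ d ih =>
    intro u a h1 h2
    by_cases h : a ≤ u + m
    · have h3 : Mwin m F a ≤ F (a + (u + m - a)) := Mwin_le a (by omega)
      have h4 : a + (u + m - a) = u + m := by omega
      have h5 := hF u
      rw [h4] at h3
      linarith
    · have h5 := hF u
      have h6 := ih (u + m) a (by omega) (by omega)
      linarith

lemma glob_of_low (hm : 0 < m) (hk : 1 ≤ k) (hF : ∀ t, F (t + m) = F t - k)
    (a q : ℕ)
    (hrec : ∀ q' < q, F (a + q) < F (a + q'))
    (hval : F (a + q) < Mwin m F a + k) :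
    ∀ u < a + q, F (a + q) < F u := by
  intro u hu
  rcases lt_or_ge u a with h | h
  · have := le_of_lt_start hm hk hF a u a (Nat.le_add_left _ _) h
    linarith
  · have h2 : u = a + (u - a) := by omega
    rw [h2]
    exact hrec (u - a) (by omega)

lemma glob_add (hk : 1 ≤ k) (hF : ∀ t, F (t + m) = F t - k)
    (t : ℕ)
    (hg : ∀ u < t, F t < F u) (hval : F t < Mwin m F 0 + k) :
    ∀ u < t + m, F (t + m) < F u := by
  intro u hu
  have ht := hF t
  rcases le_or_gt u m with h | h
  · have h2 : Mwin m F 0 ≤ F (0 + u) := Mwin_le 0 h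
    rw [Nat.zero_add] at h2
    linarith
  · have h2 := hF (u - m)
    have h3 : u - m + m = u := by omega
    rw [h3] at h2
    have h4 := hg (u - m) (by omega)
    linarith

theorem core_iff (hm : 0 < m) (hk : 1 ≤ k) (hF : ∀ t, F (t + m) = F t - k)
    (s' : ℕ) (hs' : s' < m) (q : ℕ) :
    ((1 ≤ q ∧ q ≤ m) ∧ (∀ q' < q, F (s' + q) < F (s' + q')) ∧
        F (s' + q) < Mwin m F s' + k)
      ↔ ∃ p, ((1 ≤ p ∧ p ≤ m) ∧ (∀ q' < p, F p < F q') ∧ F p < Mwin m F 0 + k) ∧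
          (p - 1 + (m - s')) % m + 1 = q := by
  constructor
  · rintro ⟨⟨hq1, hqm⟩, hrec, hval⟩
    have htg : ∀ u < s' + q, F (s' + q) < F u := glob_of_low hm hk hF s' q hrec hval
    have hmod : (s' + q - 1) % m < m := Nat.mod_lt _ hm
    refine ⟨(s' + q - 1) % m + 1, ⟨⟨by omega, by omega⟩, ?_, ?_⟩, ?_⟩
    · -- record condition for p
      rcases le_or_gt (s' + q) m with h | h
      · have hp : (s' + q - 1) % m + 1 = s' + q := by
          rw [Nat.mod_eq_of_lt (by omega)]; omega
        rw [hp]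
        exact htg
      · have hp : (s' + q - 1) % m + 1 = s' + q - m := by
          have e : s' + q - 1 = (s' + q - 1 - m) + m := by omega
          rw [e, Nat.add_mod_right, Nat.mod_eq_of_lt (by omega)]
          omega
        rw [hp]
        intro u hu
        have h2 := hF u
        have h3 := hF (s' + q - m)
        have e : s' + q - m + m = s' + q := by omega
        rw [e] at h3
        have h4 := htg (u + m) (by omega)
        linarith
    · -- value condition for p
      obtain ⟨v₀, hv₀, hveq₀⟩ := Mwin_exists (m := m) (F := F) 0
      rw [Nat.zero_add] at hveq₀
      rcases le_or_gt (s' + q) m with h | h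
      · have hp : (s' + q - 1) % m + 1 = s' + q := by
          rw [Nat.mod_eq_of_lt (by omega)]; omega
        rw [hp]
        rcases le_or_gt s' v₀ with h2 | h2
        · have h3 : Mwin m F s' ≤ F (s' + (v₀ - s')) := Mwin_le s' (by omega)
          have e : s' + (v₀ - s') = v₀ := by omega
          rw [e] at h3
          linarith
        · have h3 : Mwin m F s' ≤ F (s' + (v₀ + m - s')) := Mwin_le s' (by omega)
          have e : s' + (v₀ + m - s') = v₀ + m := by omega
          rw [e] at h3
          have h4 := hF v₀
          linarith
      · have hp : (s' + q - 1) % m + 1 = s' + q - m := by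
          have e : s' + q - 1 = (s' + q - 1 - m) + m := by omega
          rw [e, Nat.add_mod_right, Nat.mod_eq_of_lt (by omega)]
          omega
        rw [hp]
        have h4 := htg v₀ (by omega)
        have h3 := hF (s' + q - m)
        have e : s' + q - m + m = s' + q := by omega
        rw [e] at h3
        linarith
    · -- the map sends p back to q
      simp only [Nat.add_sub_cancel]
      have e1 : ((s' + q - 1) % m + (m - s')) % m = ((s' + q - 1) + (m - s')) % m :=
        Nat.mod_add_mod _ _ _
      have e2 : (s' + q - 1) + (m - s') = (q - 1) + m := by omega
      rw [e1, e2, Nat.add_mod_right, Nat.mod_eq_of_lt (by omega)]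
      omega
  · rintro ⟨p, ⟨⟨hp1, hpm⟩, hrec, hval⟩, rfl⟩
    have hglob : ∀ u < p, F p < F u := by
      have h := glob_of_low hm hk hF 0 p
        (by intro q' hq'; rw [Nat.zero_add, Nat.zero_add]; exact hrec q' hq')
        (by rw [Nat.zero_add]; exact hval)
      intro u hu
      have := h u (by omega)
      rwa [Nat.zero_add] at this
    have hmod : (p - 1 + (m - s')) % m < m := Nat.mod_lt _ hm
    refine ⟨⟨by omega, by omega⟩, ?_, ?_⟩
    · -- record condition
      rcases lt_or_ge s' p with hps | hps
      · have key : s' + ((p - 1 + (m - s')) % m + 1) = p := by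
          have e : p - 1 + (m - s') = (p - 1 - s') + m := by omega
          rw [e, Nat.add_mod_right, Nat.mod_eq_of_lt (by omega)]
          omega
        intro u hu
        rw [key]
        exact hglob (s' + u) (by omega)
      · have key : s' + ((p - 1 + (m - s')) % m + 1) = p + m := by
          rw [Nat.mod_eq_of_lt (by omega)]
          omega
        have hglobm : ∀ u < p + m, F (p + m) < F u :=
          glob_add hk hF p hglob hval
        intro u hu
        rw [key]
        exact hglobm (s' + u) (by omega)
    · -- value condition
      obtain ⟨v, hv, hveq⟩ := Mwin_exists (m := m) (F := F) s'
      rcases lt_or_ge s' p with hps | hps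
      · have key : s' + ((p - 1 + (m - s')) % m + 1) = p := by
          have e : p - 1 + (m - s') = (p - 1 - s') + m := by omega
          rw [e, Nat.add_mod_right, Nat.mod_eq_of_lt (by omega)]
          omega
        rw [key]
        rcases le_or_gt (s' + v) m with hvm | hvm
        · have h2 : Mwin m F 0 ≤ F (0 + (s' + v)) := Mwin_le 0 hvm
          rw [Nat.zero_add] at h2
          linarith
        · have h2 := hF (s' + v - m)
          have h3 : s' + v - m + m = s' + v := by omega
          rw [h3] at h2
          have h4 := hglob (s' + v - m) (by omega)
          linarith
      · have key : s' + ((p - 1 + (m - s')) % m + 1) = p + m := by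
          rw [Nat.mod_eq_of_lt (by omega)]
          omega
        rw [key]
        have hFp := hF p
        rcases le_or_gt (s' + v) m with hvm | hvm
        · have h2 : Mwin m F 0 ≤ F (0 + (s' + v)) := Mwin_le 0 hvm
          rw [Nat.zero_add] at h2
          linarith
        · have h2 := hF (s' + v - m)
          have h3 : s' + v - m + m = s' + v := by omega
          rw [h3] at h2
          have h4 : Mwin m F 0 ≤ F (0 + (s' + v - m)) := Mwin_le 0 (by omega)
          rw [Nat.zero_add] at h4
          linarith

/-! ### Translation layer -/

def gw (m : ℕ) (hm : 0 < m) (w : Fin m → ℤ) : ℕ → ℤ :=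
  fun i => w ⟨i % m, Nat.mod_lt _ hm⟩

def Fw (m : ℕ) (hm : 0 < m) (w : Fin m → ℤ) : ℕ → ℤ :=
  fun t => ∑ i ∈ Finset.range t, gw m hm w i

variable (hm : 0 < m) (w : Fin m → ℤ)

lemma gw_per (t : ℕ) : gw m hm w (t + m) = gw m hm w t := by
  unfold gw
  exact congrArg w (Fin.ext (Nat.add_mod_right t m))

lemma Fw_succ (t : ℕ) : Fw m hm w (t + 1) = Fw m hm w t + gw m hm w t :=
  Finset.sum_range_succ _ _

lemma Fw_zero : Fw m hm w 0 = 0 := rfl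

lemma psum_eq (p : ℕ) (hp : p ≤ m) : psum w p = Fw m hm w p := by
  unfold psum Fw
  rw [Finset.sum_filter]
  have h1 : ∀ i : Fin m, (if (i : ℕ) < p then w i else 0)
      = (fun j => if j < p then gw m hm w j else 0) (i : ℕ) := by
    intro i
    have h2 : gw m hm w (i : ℕ) = w i := by
      unfold gw
      exact congrArg w (Fin.ext (Nat.mod_eq_of_lt i.isLt))
    simp [h2]
  rw [Finset.sum_congr rfl (fun i _ => h1 i),
    Fin.sum_univ_eq_sum_range (fun j => if j < p then gw m hm w j else 0) m,
    ← Finset.sum_filter]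
  have h3 : (Finset.range m).filter (fun j => j < p) = Finset.range p := by
    ext j; simp only [Finset.mem_filter, Finset.mem_range]; omega
  rw [h3]

lemma sum_shift (a : ℕ) : ∀ p, ∑ i ∈ Finset.range p, gw m hm w (a + i)
    = Fw m hm w (a + p) - Fw m hm w a := by
  intro p
  induction p with
  | zero => simp
  | succ t ih =>
    rw [Finset.sum_range_succ, ih]
    have e : a + (t + 1) = (a + t) + 1 := by omega
    rw [e, Fw_succ]
    ring

lemma psum_shift (s p : ℕ) (hp : p ≤ m) :
    psum (cyclicShift s w) p = Fw m hm w (s % m + p) - Fw m hm w (s % m) := by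
  rw [psum_eq hm _ p hp]
  unfold Fw
  have h1 : ∀ i : ℕ, gw m hm (cyclicShift s w) i = gw m hm w (s % m + i) := by
    intro i
    unfold gw cyclicShift
    exact congrArg w (Fin.ext (by
      show (i % m + s) % m = (s % m + i) % m
      rw [Nat.mod_add_mod, Nat.mod_add_mod, Nat.add_comm]))
  rw [Finset.sum_congr rfl (fun i _ => h1 i)]
  exact sum_shift hm w (s % m) p

lemma Fw_add_per : ∀ t, Fw m hm w (t + m) = Fw m hm w t + Fw m hm w m := by
  intro t
  induction t with
  | zero => simp [Fw_zero]
  | succ t ih =>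
    have e : t + 1 + m = (t + m) + 1 := by omega
    rw [e, Fw_succ, gw_per, ih, Fw_succ]
    ring

end LRAux

/-- Cyclic shifts transport low records: the low records of the cyclic shift of
`w` by `s` are the images of the low records of `w` under the corresponding
cyclic bijection of step positions `{1, …, 2n+k}`. -/
theorem lowRecords_cyclicShift (n k : ℕ) (hk : 1 ≤ k) (s : ℕ)
    (w : Fin (2 * n + k) → ℤ) (hw : IsBWalk n k w) :
    lowRecords n k (cyclicShift s w) =
      (lowRecords n k w).image
        (fun p => (p - 1 + (2 * n + k - s % (2 * n + k))) % (2 * n + k) + 1) := by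
  classical
  have hm : 0 < 2 * n + k := by omega
  obtain ⟨hsteps, hcard, -⟩ := hw
  set F := LRAux.Fw (2 * n + k) hm w with hFdef
  have hFm : F (2 * n + k) = -(k : ℤ) := by
    have h0 : F (2 * n + k) = ∑ i : Fin (2 * n + k), w i := by
      rw [hFdef]
      unfold LRAux.Fw
      rw [← Fin.sum_univ_eq_sum_range (LRAux.gw (2 * n + k) hm w) (2 * n + k)]
      exact Finset.sum_congr rfl
        (fun i _ => congrArg w (Fin.ext (Nat.mod_eq_of_lt i.isLt)))
    have hsplit := Finset.sum_filter_add_sum_filter_not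
      (Finset.univ : Finset (Fin (2 * n + k))) (fun i => w i = 1) w
    have hcard2 := Finset.card_filter_add_card_filter_not
      (s := (Finset.univ : Finset (Fin (2 * n + k)))) (p := fun i => w i = 1)
    have hcardu : (Finset.univ : Finset (Fin (2 * n + k))).card = 2 * n + k := by
      simp
    have h1 : ∑ i ∈ Finset.univ.filter (fun i : Fin (2 * n + k) => w i = 1), w i
        = ((Finset.univ.filter (fun i : Fin (2 * n + k) => w i = 1)).card : ℤ) := by
      rw [Finset.sum_congr rfl (fun i hi => (Finset.mem_filter.mp hi).2),
        Finset.sum_const]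
      simp
    have hneg : ∀ i ∈ Finset.univ.filter (fun i : Fin (2 * n + k) => ¬ w i = 1),
        w i = -1 := by
      intro i hi
      rcases hsteps i with h | h
      · exact absurd h (Finset.mem_filter.mp hi).2
      · exact h
    have h2 : ∑ i ∈ Finset.univ.filter (fun i : Fin (2 * n + k) => ¬ w i = 1), w i
        = -((Finset.univ.filter (fun i : Fin (2 * n + k) => ¬ w i = 1)).card : ℤ) := by
      rw [Finset.sum_congr rfl hneg, Finset.sum_const]
      simp
    have h3 : (Finset.univ.filter (fun i : Fin (2 * n + k) => ¬ w i = 1)).card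
        = n + k := by
      omega
    rw [h0, ← hsplit, h1, h2, hcard, h3]
    push_cast
    ring
  have hper : ∀ t, F (t + (2 * n + k)) = F t - (k : ℤ) := by
    intro t
    rw [hFdef, LRAux.Fw_add_per hm w t, ← hFdef, hFm]
    ring
  set s' := s % (2 * n + k) with hs'def
  have hs' : s' < 2 * n + k := Nat.mod_lt _ hm
  have hkz : (1 : ℤ) ≤ (k : ℤ) := by exact_mod_cast hk
  have hpsum : ∀ p ≤ 2 * n + k, psum w p = F p := fun p hp => LRAux.psum_eq hm w p hp
  have hpsum' : ∀ p ≤ 2 * n + k, psum (cyclicShift s w) p = F (s' + p) - F s' :=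
    fun p hp => LRAux.psum_shift hm w s p hp
  have hmin0 : minVal n k w = LRAux.Mwin (2 * n + k) F 0 := by
    unfold minVal
    apply le_antisymm
    · obtain ⟨v, hv, hveq⟩ := LRAux.Mwin_exists (m := 2 * n + k) (F := F) 0
      rw [Nat.zero_add] at hveq
      have h1 : (Finset.range (2 * n + k + 1)).inf' (by simp) (psum w) ≤ psum w v :=
        Finset.inf'_le _ (Finset.mem_range.mpr (by omega))
      rw [hpsum v hv] at h1
      linarith [hveq.le, hveq.ge]
    · apply Finset.le_inf'
      intro b hb
      have hb' : b ≤ 2 * n + k := by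
        have := Finset.mem_range.mp hb; omega
      rw [hpsum b hb']
      have h2 := LRAux.Mwin_le (m := 2 * n + k) (F := F) 0 hb'
      rwa [Nat.zero_add] at h2
  have hmins : minVal n k (cyclicShift s w) = LRAux.Mwin (2 * n + k) F s' - F s' := by
    unfold minVal
    apply le_antisymm
    · obtain ⟨v, hv, hveq⟩ := LRAux.Mwin_exists (m := 2 * n + k) (F := F) s'
      have h1 : (Finset.range (2 * n + k + 1)).inf' (by simp) (psum (cyclicShift s w))
          ≤ psum (cyclicShift s w) v :=
        Finset.inf'_le _ (Finset.mem_range.mpr (by omega))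
      rw [hpsum' v hv] at h1
      linarith [hveq.le, hveq.ge]
    · apply Finset.le_inf'
      intro b hb
      have hb' : b ≤ 2 * n + k := by
        have := Finset.mem_range.mp hb; omega
      rw [hpsum' b hb']
      have h2 := LRAux.Mwin_le (m := 2 * n + k) (F := F) s' hb'
      linarith
  unfold lowRecords
  ext q
  simp only [Finset.mem_filter, Finset.mem_image, Finset.mem_Icc, gt_iff_lt]
  have main := LRAux.core_iff (m := 2 * n + k) (k := (k : ℤ)) (F := F)
    hm hkz hper s' hs' q
  constructor
  · rintro ⟨⟨hq1, hqm⟩, hrec, hval⟩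
    have hA : ∀ q' < q, F (s' + q) < F (s' + q') := by
      intro q' hq'
      have h := hrec q' hq'
      rw [hpsum' q hqm, hpsum' q' (by omega)] at h
      linarith
    have hB : F (s' + q) < LRAux.Mwin (2 * n + k) F s' + (k : ℤ) := by
      have h := hval
      rw [hpsum' q hqm, hmins] at h
      linarith
    obtain ⟨p, ⟨⟨hp1, hpm⟩, hprec, hpval⟩, hmap⟩ := main.mp ⟨⟨hq1, hqm⟩, hA, hB⟩
    refine ⟨p, ⟨⟨hp1, hpm⟩, ?_, ?_⟩, hmap⟩
    · intro q' hq'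
      rw [hpsum p hpm, hpsum q' (by omega)]
      exact hprec q' hq'
    · rw [hpsum p hpm, hmin0]
      exact hpval
  · rintro ⟨p, ⟨⟨hp1, hpm⟩, hprec, hpval⟩, hmap⟩
    have hA : ∀ q' < p, F p < F q' := by
      intro q' hq'
      have h := hprec q' hq'
      rw [hpsum p hpm, hpsum q' (by omega)] at h
      linarith
    have hB : F p < LRAux.Mwin (2 * n + k) F 0 + (k : ℤ) := by
      have h := hpval
      rw [hpsum p hpm, hmin0] at h
      linarith
    obtain ⟨⟨hq1, hqm⟩, hrec, hval⟩ := main.mpr ⟨p, ⟨⟨hp1, hpm⟩, hA, hB⟩, hmap⟩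
    refine ⟨⟨hq1, hqm⟩, ?_, ?_⟩
    · intro q' hq'
      rw [hpsum' q hqm, hpsum' q' (by omega)]
      have := hrec q' hq'
      linarith
    · rw [hpsum' q hqm, hmins]
      linarith
end

section
/- Noncrossing successor cords: Let e_1, ..., e_k be integers with the property that for each i < k with e_i ≥ 1 there exists j > i with e_j = e_i - 1, and define s(i) = min{ j > i : e_j = e_i - 1 }. Then the chords (i, s(i)) are pairwise noncrossing: there are no indices i < j < s(i) < s(j). -/
lemma noncrossing_aux (K : ℕ) (e : ℕ → ℤ)
    (hstep : ∀ l, 1 ≤ l → l + 1 ≤ K → |e (l + 1) - e l| ≤ 1)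
    (a : ℕ) (ha : 1 ≤ a) :
    ∀ l, a ≤ l → l ≤ K → (∀ l', a < l' → l' ≤ l → e l' ≠ e a - 1) → e a ≤ e l := by
  intro l hal hlK hne
  induction l with
  | zero => omega
  | succ m ih =>
    rcases Nat.eq_or_lt_of_le hal with h | h
    · rw [← h]
    · have ham : a ≤ m := by omega
      have hm := ih ham (by omega) (fun l' h1 h2 => hne l' h1 (by omega))
      have hs := hstep m (by omega) hlK
      have hne' : e (m + 1) ≠ e a - 1 := hne (m + 1) (by omega) le_rfl
      rw [abs_le] at hs
      omega

/-- Noncrossing successor cords. The labels `e 1, …, e K` are the corner labels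
in clockwise order around a face (so that consecutive labels differ by at most
one), each positive label has a later label one smaller, and
`s i = min { j > i : e j = e i - 1 }` is the successor of corner `i`.  Then the
cords `(i, s i)` are pairwise noncrossing: there are no indices
`i < j < s i < s j`. -/
theorem noncrossing_cords (K : ℕ) (e : ℕ → ℤ)
    (hstep : ∀ l, 1 ≤ l → l + 1 ≤ K → |e (l + 1) - e l| ≤ 1)
    (hsucc : ∀ i, 1 ≤ i → i < K → 1 ≤ e i → ∃ j, i < j ∧ j ≤ K ∧ e j = e i - 1)
    (i j si sj : ℕ) (hi : 1 ≤ i) (hj : 1 ≤ j) (hsiK : si ≤ K) (hsjK : sj ≤ K)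
    (hsi : i < si ∧ e si = e i - 1 ∧ ∀ l, i < l → l < si → e l ≠ e i - 1)
    (hsj : j < sj ∧ e sj = e j - 1 ∧ ∀ l, j < l → l < sj → e l ≠ e j - 1) :
    ¬(i < j ∧ j < si ∧ si < sj) := by
  rintro ⟨hij, hjsi, hsisj⟩
  obtain ⟨his, hesi, hmini⟩ := hsi
  obtain ⟨hjs, hesj, hminj⟩ := hsj
  have h1 : e i ≤ e j :=
    noncrossing_aux K e hstep i hi j (by omega) (by omega)
      (fun l' h1 h2 => hmini l' h1 (by omega))
  have h2 : e j ≤ e si :=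
    noncrossing_aux K e hstep j hj si (by omega) hsiK
      (fun l' h1 h2 => hminj l' h1 (by omega))
  omega
end
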